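/- arXiv:alg-geom/9706009 — 3 statements merged into one kernel-verified Lean document; each statement's English description precedes it below -/
import Mathlib

section
/- Let k be a field and U ⊆ k((z)) a k-subspace containing a nonzero element. Suppose U has an element of maximal order m, i.e. there exists g ∈ U of order m and every nonzero element of U has order ≤ m. If f₋ ∈ 1 + z^{-1}k[z^{-1}] and f₊ ∈ 1 + z·k[[z]] are units of k((z)) with f₋·U = f₊·U, then f₋ = f₊ = 1. -/
/-! Write `f₊ g = f₋ u` with `u ∈ U`. Since `f₊` has order `0` and `u` has order at most
`m = ord g`, comparing orders gives `ord f₋ ≥ 0`; as `f₋ ∈ 1 + z⁻¹k[z⁻¹]`, this forces `f₋ = 1`.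
Then `f₊ U = U`, so `(f₊ - 1) g ∈ U`, whose order exceeds `m` unless `f₊ = 1`. -/

open HahnSeries

variable {k : Type*} [Field k]

/-- The substitution `z ↦ -z` on formal Laurent series. -/
noncomputable def sigma0 (f : LaurentSeries k) : LaurentSeries k where
  coeff i := (-1 : k) ^ i * f.coeff i
  isPWO_support' := f.isPWO_support'.mono (by
    intro i hi
    simp only [Function.mem_support] at hi ⊢
    exact fun h => hi (by rw [h, mul_zero]))

/-- The pairing `⟨f,g⟩ = Res_{z=0} f(z)·g(-z) dz`. -/
noncomputable def lpair (f g : LaurentSeries k) : k := (f * sigma0 g).coeff (-1)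

/-- `k[[z]]` inside `k((z))`. -/
def posPart (k : Type*) [Field k] : Submodule k (LaurentSeries k) where
  carrier := {f | ∀ i : ℤ, i < 0 → f.coeff i = 0}
  add_mem' := by intro f g hf hg i hi; simp [hf i hi, hg i hi]
  zero_mem' := by intro i hi; simp
  smul_mem' := by intro c f hf i hi; simp [hf i hi]

/-- Orthogonal complement with respect to `lpair`. -/
def lorth (U : Submodule k (LaurentSeries k)) : Submodule k (LaurentSeries k) where
  carrier := {f | ∀ u ∈ U, lpair f u = 0}
  add_mem' := by
    intro f g hf hg u hu
    have h : lpair (f + g) u = lpair f u + lpair g u := by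
      simp [lpair, add_mul]
    rw [h, hf u hu, hg u hu, add_zero]
  zero_mem' := by intro u hu; simp [lpair]
  smul_mem' := by
    intro c f hf u hu
    have h : lpair (c • f) u = c * lpair f u := by
      simp only [lpair]
      rw [← HahnSeries.single_zero_mul_eq_smul, mul_assoc, HahnSeries.single_zero_mul_eq_smul,
        HahnSeries.coeff_smul]
      rfl
    rw [h, hf u hu, mul_zero]

/-- Even Laurent series: `k((z²))`. -/
def evenPart (k : Type*) [Field k] : Submodule k (LaurentSeries k) where
  carrier := {f | ∀ i : ℤ, Odd i → f.coeff i = 0}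
  add_mem' := by intro f g hf hg i hi; simp [hf i hi, hg i hi]
  zero_mem' := by intro i hi; simp
  smul_mem' := by intro c f hf i hi; simp [hf i hi]

/-- Odd Laurent series: `z·k((z²))`. -/
def oddPart (k : Type*) [Field k] : Submodule k (LaurentSeries k) where
  carrier := {f | ∀ i : ℤ, Even i → f.coeff i = 0}
  add_mem' := by intro f g hf hg i hi; simp [hf i hi, hg i hi]
  zero_mem' := by intro i hi; simp
  smul_mem' := by intro c f hf i hi; simp [hf i hi]

lemma laurent_mul_smul_comm (g : LaurentSeries k) (c : k) (u : LaurentSeries k) :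
    g * (c • u) = c • (g * u) := by
  rw [← HahnSeries.single_zero_mul_eq_smul, ← mul_assoc,
    mul_comm g (HahnSeries.single 0 c), mul_assoc, HahnSeries.single_zero_mul_eq_smul]

/-- Multiplication by `g` as a `k`-linear endomorphism of `k((z))`. -/
noncomputable def mulL (g : LaurentSeries k) : LaurentSeries k →ₗ[k] LaurentSeries k where
  toFun u := g * u
  map_add' u v := mul_add g u v
  map_smul' c u := laurent_mul_smul_comm g c u

namespace HahnSeries

variable {Γ R : Type*} [LinearOrder Γ] [Zero Γ]

theorem order_eq_zero_of_coeff_zero_ne_zero [Zero R] {f : HahnSeries Γ R} (h0 : f.coeff 0 ≠ 0)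
    (hneg : ∀ i < 0, f.coeff i = 0) : f.order = 0 :=
  le_antisymm (order_le_of_coeff_ne_zero h0)
    ((le_order_iff_forall (ne_zero_of_coeff_ne_zero h0)).2 hneg)

theorem eq_one_of_order_nonneg [Zero R] [One R] {f : HahnSeries Γ R} (h0 : f.coeff 0 = 1)
    (hpos : ∀ i, 0 < i → f.coeff i = 0) (hord : 0 ≤ f.order) : f = 1 := by
  ext i
  rcases lt_trichotomy i 0 with hi | rfl | hi
  · rw [coeff_eq_zero_of_lt_order (hi.trans_le hord), coeff_one, if_neg hi.ne]
  · rw [h0, coeff_one, if_pos rfl]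
  · rw [hpos i hi, coeff_one, if_neg hi.ne']

theorem order_sub_one_pos [AddGroupWithOne R] {f : HahnSeries Γ R} (h0 : f.coeff 0 = 1)
    (hneg : ∀ i < 0, f.coeff i = 0) (hf : f ≠ 1) : 0 < (f - 1).order := by
  have hcoeff : ∀ i ≤ 0, (f - 1).coeff i = 0 := by
    intro i hi
    rcases hi.lt_or_eq with hi | rfl
    · rw [coeff_sub, hneg i hi, coeff_one, if_neg hi.ne, sub_zero]
    · rw [coeff_sub, h0, coeff_one, if_pos rfl, sub_self]
  by_contra! hle
  exact sub_ne_zero.2 hf (coeff_order_eq_zero.1 (hcoeff _ hle))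

end HahnSeries

section MaximalOrder

variable (U : Submodule k (LaurentSeries k)) {g : LaurentSeries k}
  (hmax : ∀ u ∈ U, u ≠ 0 → u.order ≤ g.order)
include hmax

theorem order_le_order_add_of_mem_map_mulL {f v : LaurentSeries k} (hv : v ∈ U.map (mulL f))
    (hv0 : v ≠ 0) : v.order ≤ f.order + g.order := by
  obtain ⟨u, hu, rfl⟩ := hv
  have hfu : f * u ≠ 0 := hv0
  rw [show mulL f u = f * u from rfl, order_mul (left_ne_zero_of_mul hfu)
    (right_ne_zero_of_mul hfu)]
  exact add_le_add_right (hmax u hu (right_ne_zero_of_mul hfu)) _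

theorem eq_one_of_map_mulL_eq_self (hgU : g ∈ U) (hg0 : g ≠ 0) {f : LaurentSeries k}
    (hfU : U.map (mulL f) = U) (h0 : f.coeff 0 = 1) (hneg : ∀ i < 0, f.coeff i = 0) :
    f = 1 := by
  by_contra hf
  have hmem : (f - 1) * g ∈ U := by
    rw [sub_mul, one_mul]
    exact sub_mem (hfU ▸ Submodule.mem_map_of_mem (f := mulL f) hgU) hgU
  have hf1 : f - 1 ≠ 0 := sub_ne_zero.2 hf
  have hle := hmax _ hmem (mul_ne_zero hf1 hg0)
  rw [order_mul hf1 hg0] at hle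
  have hpos := order_sub_one_pos h0 hneg hf
  omega

end MaximalOrder

theorem map_mulL_one (U : Submodule k (LaurentSeries k)) : U.map (mulL 1) = U := by
  have : mulL (1 : LaurentSeries k) = LinearMap.id := LinearMap.ext one_mul
  rw [this, Submodule.map_id]

/-- if `U` has an element of maximal order and `f₋·U = f₊·U` with
`f₋ ∈ 1 + z⁻¹k[z⁻¹]`, `f₊ ∈ 1 + z·k[[z]]`, then `f₋ = f₊ = 1`. -/
theorem statement11 (U : Submodule k (LaurentSeries k)) (m : ℤ)
    (g : LaurentSeries k) (hgU : g ∈ U) (hg0 : g ≠ 0) (hgo : g.order = m)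
    (hmax : ∀ u ∈ U, u ≠ (0 : LaurentSeries k) → u.order ≤ m)
    (fm fp : LaurentSeries k)
    (hfm0 : fm.coeff 0 = 1) (hfm : ∀ i : ℤ, 0 < i → fm.coeff i = 0)
    (hfp0 : fp.coeff 0 = 1) (hfp : ∀ i : ℤ, i < 0 → fp.coeff i = 0)
    (heq : U.map (mulL fm) = U.map (mulL fp)) :
    fm = 1 ∧ fp = 1 := by
  subst hgo
  have hfp_ne : fp ≠ 0 := ne_zero_of_coeff_ne_zero (hfp0 ▸ one_ne_zero)
  have hfpg : fp * g ∈ U.map (mulL fm) := heq ▸ Submodule.mem_map_of_mem (f := mulL fp) hgU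
  have hfm1 : fm = 1 := by
    refine eq_one_of_order_nonneg hfm0 hfm ?_
    have hord := order_le_order_add_of_mem_map_mulL U hmax hfpg (mul_ne_zero hfp_ne hg0)
    rw [order_mul hfp_ne hg0, order_eq_zero_of_coeff_zero_ne_zero (hfp0 ▸ one_ne_zero) hfp]
      at hord
    omega
  refine ⟨hfm1, eq_one_of_map_mulL_eq_self U hmax hgU hg0 ?_ hfp0 hfp⟩
  rw [← heq, hfm1, map_mulL_one]
end

section
/- Let k be a field with char(k) ≠ 2, V = k((z)) with pairing <f,g> = Res_{z=0} f(z)g(-z) dz, and let U ⊆ V be a subspace with U = U^⊥. Let B = {f ∈ V : f·U ⊆ U} be the stabilizer algebra of U. Then B is closed under the involution f(z) ↦ f(-z): if f ∈ B then f(-z) ∈ B. -/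
open HahnSeries

variable {k : Type*} [Field k]

@[simp]
lemma sigma0_coeff (f : LaurentSeries k) (i : ℤ) : (sigma0 f).coeff i = (-1 : k) ^ i * f.coeff i :=
  rfl

@[simp]
lemma support_sigma0 (f : LaurentSeries k) : (sigma0 f).support = f.support := by
  ext i
  simp [zpow_ne_zero]

lemma sigma0_mul (a b : LaurentSeries k) : sigma0 (a * b) = sigma0 a * sigma0 b := by
  ext n
  rw [sigma0_coeff, coeff_mul, coeff_mul, Finset.mul_sum]
  simp only [support_sigma0]
  refine Finset.sum_congr rfl fun ij hij => ?_
  rw [Finset.mem_antidiagonal] at hij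
  rw [sigma0_coeff, sigma0_coeff, ← hij.2.2, zpow_add₀ (neg_ne_zero.mpr one_ne_zero)]
  ring

lemma lpair_sigma0_mul (f u v : LaurentSeries k) :
    lpair (sigma0 f * u) v = lpair u (f * v) := by
  rw [lpair, lpair, sigma0_mul, mul_comm (sigma0 f) u, mul_assoc]

theorem statement12_general (U : Submodule k (LaurentSeries k))
    (hU : lorth U = U) (f : LaurentSeries k) (hf : ∀ u ∈ U, f * u ∈ U) :
    ∀ u ∈ U, sigma0 f * u ∈ U := by
  intro u hu
  have hu_orth : u ∈ lorth U := by rwa [hU]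
  rw [← hU]
  intro v hv
  rw [lpair_sigma0_mul]
  exact hu_orth (f * v) (hf v hv)

/-- the stabilizer algebra `B = {f : f·U ⊆ U}` of a maximal totally
isotropic subspace `U` is stable under the involution `f(z) ↦ f(-z)`. -/
theorem statement12 (h2 : (2 : k) ≠ 0) (U : Submodule k (LaurentSeries k))
    (hU : lorth U = U) (f : LaurentSeries k) (hf : ∀ u ∈ U, f * u ∈ U) :
    ∀ u ∈ U, sigma0 f * u ∈ U :=
  statement12_general U hU f hf
end

section
/- Let A be a complete, linearly topologized commutative ring whose topology is defined by a decreasing sequence of ideals, with definition ideal J. If A/J is Noetherian and J/J² is a finitely generated A/J-module, then A is Noetherian. In particular, if A/J ≅ k is a field and dim_k(J/J²) < ∞, then A is Noetherian. -/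
/-!
Let `s ⊆ J` lift generators of `J/J²`. Then `gr_J A = ⊕ Jᵖ/Jᵖ⁺¹` is a quotient of the polynomial
ring `(A/J)[X_s]`, hence Noetherian. For an ideal `K`, lift finitely many generators of its
initial ideal to elements `yᵢ ∈ K`: every `z ∈ K ∩ Jᵖ` can then be corrected by a combination of
the `yᵢ` into `K ∩ Jᵖ⁺¹`. Iterating produces coefficient series that converge because `Jᵐ → 0`,
and completeness and separatedness show that `z` lies in the ideal generated by the `yᵢ`.
-/

open MvPolynomial Finset Filter

namespace MvPolynomial

variable {σ R : Type*}

theorem homogeneousComponent_mul_of_isHomogeneous_right [CommSemiring R]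
    {b : MvPolynomial σ R} {i : ℕ} (hb : b.IsHomogeneous i) (a : MvPolynomial σ R) (n : ℕ)
    [Decidable (i ≤ n)] :
    homogeneousComponent n (a * b) =
      if i ≤ n then homogeneousComponent (n - i) a * b else 0 := by
  let _ := gradedAlgebra (σ := σ) (R := R)
  simp only [← decomposition.decompose'_apply]
  exact DirectSum.coe_decompose_mul_of_right_mem _ n ((mem_homogeneousSubmodule _ _).2 hb)

theorem homogeneousComponent_map [CommSemiring R] {S : Type*} [CommSemiring S] (φ : R →+* S)
    (n : ℕ) (f : MvPolynomial σ R) :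
    homogeneousComponent n (map φ f) = map φ (homogeneousComponent n f) := by
  ext d
  simp only [coeff_homogeneousComponent, coeff_map]
  split_ifs <;> simp

theorem exists_isHomogeneous_map_eq [CommSemiring R] {S : Type*} [CommSemiring S]
    {φ : R →+* S} (hφ : Function.Surjective φ) {F : MvPolynomial σ S} {n : ℕ}
    (hF : F.IsHomogeneous n) : ∃ f : MvPolynomial σ R, f.IsHomogeneous n ∧ map φ f = F := by
  obtain ⟨f, rfl⟩ := map_surjective φ hφ F
  exact ⟨homogeneousComponent n f, homogeneousComponent_isHomogeneous n f,
    by rw [← homogeneousComponent_map, homogeneousComponent_eq_self hF]⟩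

theorem exists_isHomogeneous_coeffs_of_mem_span [CommSemiring R] {ι : Type*} [Fintype ι]
    {F : ι → MvPolynomial σ R} {n : ι → ℕ} (hF : ∀ i, (F i).IsHomogeneous (n i))
    {G : MvPolynomial σ R} {p : ℕ} (hG : G.IsHomogeneous p)
    (hmem : G ∈ Ideal.span (Set.range F)) :
    ∃ c : ι → MvPolynomial σ R, (∀ i, (c i).IsHomogeneous (p - n i)) ∧
      (∀ i, p < n i → c i = 0) ∧ G = ∑ i, c i * F i := by
  classical
  obtain ⟨c, rfl⟩ := Ideal.mem_span_range_iff_exists_fun.1 hmem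
  refine ⟨fun i => if n i ≤ p then homogeneousComponent (p - n i) (c i) else 0, fun i => ?_,
    fun i hi => if_neg (not_le.2 hi), ?_⟩
  · dsimp only
    split_ifs
    exacts [homogeneousComponent_isHomogeneous _ _, isHomogeneous_zero _ _ _]
  · rw [← homogeneousComponent_eq_self hG, map_sum]
    refine sum_congr rfl fun i _ => ?_
    rw [homogeneousComponent_mul_of_isHomogeneous_right (hF i)]
    dsimp only
    split_ifs <;> simp

theorem exists_isHomogeneous_sub_sum_mul_map_eq_zero [CommRing R] {S : Type*} [CommRing S]
    {φ : R →+* S} (hφ : Function.Surjective φ) {ι : Type*} [Fintype ι]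
    {F : ι → MvPolynomial σ R} {n : ι → ℕ} (hF : ∀ i, (F i).IsHomogeneous (n i))
    {G : MvPolynomial σ R} {p : ℕ} (hG : G.IsHomogeneous p)
    (hmem : map φ G ∈ Ideal.span (Set.range fun i => map φ (F i))) :
    ∃ q : ι → MvPolynomial σ R, (∀ i, (q i).IsHomogeneous (p - n i)) ∧
      (G - ∑ i, q i * F i).IsHomogeneous p ∧ map φ (G - ∑ i, q i * F i) = 0 := by
  obtain ⟨c, hc, hc0, hG'⟩ :=
    exists_isHomogeneous_coeffs_of_mem_span (fun i => (hF i).map φ) (hG.map φ) hmem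
  have hlift : ∀ i, ∃ q : MvPolynomial σ R,
      q.IsHomogeneous (p - n i) ∧ (q * F i).IsHomogeneous p ∧ map φ q = c i := by
    intro i
    by_cases hi : n i ≤ p
    · obtain ⟨q, hq, hqc⟩ := exists_isHomogeneous_map_eq hφ (hc i)
      exact ⟨q, hq, by simpa [Nat.sub_add_cancel hi] using hq.mul (hF i), hqc⟩
    · exact ⟨0, isHomogeneous_zero _ _ _, by simpa using isHomogeneous_zero _ _ _,
        by simp [hc0 i (not_le.1 hi)]⟩
  choose q hq hqF hqc using hlift
  refine ⟨q, hq, hG.sub (IsHomogeneous.sum _ _ _ fun i _ => hqF i), ?_⟩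
  simp [hqc, ← hG']

theorem IsHomogeneous.eval_mem_mul_span_pow {A : Type*} [CommRing A] {x : σ → A}
    {g : MvPolynomial σ A} {p : ℕ} (hg : g.IsHomogeneous p) {C : Ideal A}
    (hC : ∀ d, coeff d g ∈ C) : eval x g ∈ C * Ideal.span (Set.range x) ^ p := by
  rw [g.as_sum, map_sum]
  refine Ideal.sum_mem _ fun d hd => ?_
  have hdeg : d.degree = p := by
    by_contra h
    exact mem_support_iff.1 hd (hg.coeff_eq_zero h)
  rw [eval_monomial]
  refine Ideal.mul_mem_mul (hC d) ((Ideal.mem_span_pow_iff_exists_isHomogeneous x _).2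
    ⟨monomial d 1, isHomogeneous_monomial _ hdeg, by simp [eval_monomial]⟩)

end MvPolynomial

theorem Ideal.pow_le_pow_sup_pow_succ {A : Type*} [CommRing A] {J S : Ideal A} (hSJ : S ≤ J)
    (hJ : J ≤ S ⊔ J ^ 2) (p : ℕ) : J ^ p ≤ S ^ p ⊔ J ^ (p + 1) := by
  induction p with
  | zero => simp
  | succ p ih =>
    calc J ^ (p + 1) = J * J ^ p := pow_succ' J p
      _ ≤ J * (S ^ p ⊔ J ^ (p + 1)) := mul_mono_right ih
      _ = J * S ^ p ⊔ J ^ (p + 2) := by rw [mul_sup, ← pow_succ']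
      _ ≤ (S ⊔ J ^ 2) * S ^ p ⊔ J ^ (p + 2) := sup_le_sup_right (mul_mono_left hJ) _
      _ = S ^ (p + 1) ⊔ J ^ 2 * S ^ p ⊔ J ^ (p + 2) := by rw [sup_mul, ← pow_succ']
      _ ≤ S ^ (p + 1) ⊔ J ^ (p + 2) := by
        refine sup_le (sup_le le_sup_left (le_sup_of_le_right ?_)) le_sup_right
        calc J ^ 2 * S ^ p ≤ J ^ 2 * J ^ p := mul_mono_right (pow_right_mono hSJ p)
          _ = J ^ (p + 2) := by rw [← pow_add, add_comm]

section Completion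

variable {A : Type*} [CommRing A]

def IsCompleteSeparated (I : ℕ → Ideal A) : Prop :=
  ∀ a : ℕ → A, (∀ n m : ℕ, n ≤ m → a m - a n ∈ I n) → ∃! x : A, ∀ n : ℕ, x - a n ∈ I n

variable {I : ℕ → Ideal A} {J : Ideal A} {ι : Type*} [Fintype ι]

/-- The leading forms of the `y i`, placed in degree `n i`, generate the initial ideal of `K` in
`gr_J A`. -/
def IsStandardBasis (J K : Ideal A) (y : ι → A) (n : ι → ℕ) : Prop :=
  ∀ p, ∀ z ∈ K, z ∈ J ^ p →
    ∃ d : ι → A, (∀ i, d i ∈ J ^ (p - n i)) ∧ z - ∑ i, d i * y i ∈ J ^ (p + 1)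

theorem IsCompleteSeparated.eq_zero_of_forall_mem (hI : IsCompleteSeparated I) {u : A}
    (hu : ∀ n, u ∈ I n) : u = 0 :=
  (hI (fun _ => 0) (by simp)).unique (by simpa using hu) (by simp)

theorem exists_monotone_pow_le (hJ : ∀ n, ∃ m, J ^ m ≤ I n) :
    ∃ N : ℕ → ℕ, Monotone N ∧ ∀ k, J ^ N k ≤ I k := by
  choose m hm using hJ
  refine ⟨fun k => (range (k + 1)).sup m, fun k l hkl => sup_mono (by simpa using hkl),
    fun k => (Ideal.pow_le_pow_right (le_sup (by simp))).trans (hm k)⟩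

theorem IsCompleteSeparated.exists_tendsto_sum (hI : IsCompleteSeparated I)
    (hJ : ∀ n, ∃ m, J ^ m ≤ I n) {d : ℕ → A} {c : ℕ} (hd : ∀ q, d q ∈ J ^ (q - c)) :
    ∃ L, ∀ k, ∀ᶠ P in atTop, L - ∑ q ∈ range P, d q ∈ I k := by
  obtain ⟨N, hNmono, hN⟩ := exists_monotone_pow_le hJ
  have htail : ∀ k P, ∑ q ∈ Ico (N k + c) P, d q ∈ I k := fun k P =>
    hN k (Ideal.sum_mem _ fun q hq => Ideal.pow_le_pow_right (by simp at hq; omega) (hd q))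
  obtain ⟨L, hL, -⟩ := hI (fun k => ∑ q ∈ range (N k + c), d q) fun k m hkm => by
    rw [← sum_Ico_eq_sub _ (Nat.add_le_add_right (hNmono hkm) c)]
    exact htail k (N m + c)
  refine ⟨L, fun k => (eventually_ge_atTop (N k + c)).mono fun P hP => ?_⟩
  have hsplit : L - ∑ q ∈ range P, d q
      = (L - ∑ q ∈ range (N k + c), d q) - ∑ q ∈ Ico (N k + c) P, d q := by
    rw [sum_Ico_eq_sub _ hP]; ring
  exact hsplit ▸ sub_mem (hL k) (htail k P)

variable {K : Ideal A} {y : ι → A} {n : ι → ℕ}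

theorem IsStandardBasis.exists_seq_sub_sum_mul_mem_pow (hy : IsStandardBasis J K y n)
    (hyK : ∀ i, y i ∈ K) {z : A} (hz : z ∈ K) :
    ∃ d : ℕ → ι → A, (∀ p i, d p i ∈ J ^ (p - n i)) ∧
      ∀ P, z - ∑ i, (∑ q ∈ range P, d q i) * y i ∈ J ^ P := by
  unfold IsStandardBasis at hy
  choose! D hD hDJ using hy
  let r : ℕ → A := fun P => Nat.rec z (fun p rp => rp - ∑ i, D p rp i * y i) P
  have hr : ∀ P, r P ∈ K ∧ r P ∈ J ^ P := by
    intro P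
    induction P with
    | zero => exact ⟨hz, by simp⟩
    | succ p ih =>
      exact ⟨sub_mem ih.1 (sum_mem fun i _ => Ideal.mul_mem_left _ _ (hyK i)),
        hDJ p _ ih.1 ih.2⟩
  refine ⟨fun p => D p (r p), fun p => hD p _ (hr p).1 (hr p).2, fun P => ?_⟩
  suffices z - ∑ i, (∑ q ∈ range P, D q (r q) i) * y i = r P from this ▸ (hr P).2
  induction P with
  | zero => simp [r]
  | succ P ih =>
    simp only [sum_range_succ, add_mul, sum_add_distrib, ← sub_sub, ih]
    rfl

theorem IsCompleteSeparated.le_span_of_isStandardBasis (hI : IsCompleteSeparated I)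
    (hJ : ∀ n, ∃ m, J ^ m ≤ I n) (hyK : ∀ i, y i ∈ K) (hy : IsStandardBasis J K y n) :
    K ≤ Ideal.span (Set.range y) := by
  intro z hz
  obtain ⟨d, hd, happrox⟩ := hy.exists_seq_sub_sum_mul_mem_pow hyK hz
  choose c hc using fun i => hI.exists_tendsto_sum hJ (hd · i)
  have hzc : z = ∑ i, c i * y i := by
    refine sub_eq_zero.1 (hI.eq_zero_of_forall_mem fun k => ?_)
    obtain ⟨m, hm⟩ := hJ k
    obtain ⟨P, hP, hmP⟩ :=
      ((eventually_all.2 fun i => hc i k).and (eventually_ge_atTop m)).exists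
    have hsplit : z - ∑ i, c i * y i = (z - ∑ i, (∑ q ∈ range P, d q i) * y i)
        - ∑ i, (c i - ∑ q ∈ range P, d q i) * y i := by
      simp only [sub_mul, sum_sub_distrib]; ring
    exact hsplit ▸ sub_mem (hm (Ideal.pow_le_pow_right hmP (happrox P)))
      (sum_mem fun i _ => Ideal.mul_mem_right _ _ (hP i))
  exact hzc ▸ sum_mem fun i _ => Ideal.mul_mem_left _ _ (Ideal.subset_span ⟨i, rfl⟩)

end Completion

section InitialForms

variable {A σ : Type*} [CommRing A] (x : σ → A) (J K : Ideal A)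

/-- The homogeneous polynomials over `A/J` whose value at `x` is the leading form of an element of
`K`: the preimage in `(A/J)[X]` of the initial ideal of `K` in `gr_J A`. -/
def initialForms : Set (MvPolynomial σ (A ⧸ J)) :=
  {F | ∃ (p : ℕ) (f : MvPolynomial σ A) (y : A), f.IsHomogeneous p ∧
    map (Ideal.Quotient.mk J) f = F ∧ y ∈ K ∧ eval x f - y ∈ J ^ (p + 1)}

variable {x J K}

theorem MvPolynomial.IsHomogeneous.eval_mem_pow_succ_of_map_eq_zero (hx : ∀ i, x i ∈ J)
    {g : MvPolynomial σ A} {p : ℕ} (hg : g.IsHomogeneous p)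
    (hg0 : map (Ideal.Quotient.mk J) g = 0) : eval x g ∈ J ^ (p + 1) := by
  have hC : ∀ d, coeff d g ∈ J := fun d => by
    simpa [coeff_map, Ideal.Quotient.eq_zero_iff_mem] using congr_arg (coeff d) hg0
  refine pow_succ' J p ▸ Ideal.mul_mono_right (Ideal.pow_right_mono ?_ p)
    (hg.eval_mem_mul_span_pow hC)
  exact Ideal.span_le.2 (Set.range_subset_iff.2 hx)

theorem isStandardBasis_of_initialForms_subset_span (hx : ∀ i, x i ∈ J)
    (hJ : J ≤ Ideal.span (Set.range x) ⊔ J ^ 2) {ι : Type*} [Fintype ι] {n : ι → ℕ}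
    {f : ι → MvPolynomial σ A} (hf : ∀ i, (f i).IsHomogeneous (n i)) {y : ι → A}
    (hy : ∀ i, eval x (f i) - y i ∈ J ^ (n i + 1))
    (hspan : initialForms x J K ⊆
      Ideal.span (Set.range fun i => map (Ideal.Quotient.mk J) (f i))) :
    IsStandardBasis J K y n := by
  refine fun p z hzK hzJ => ?_
  have hSJ : Ideal.span (Set.range x) ≤ J := Ideal.span_le.2 (Set.range_subset_iff.2 hx)
  obtain ⟨e, he, w, hw, rfl⟩ := Submodule.mem_sup.1 (Ideal.pow_le_pow_sup_pow_succ hSJ hJ p hzJ)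
  obtain ⟨g, hg, rfl⟩ := (Ideal.mem_span_pow_iff_exists_isHomogeneous x e).1 he
  obtain ⟨q, hq, hgq, hgq0⟩ := exists_isHomogeneous_sub_sum_mul_map_eq_zero
    Ideal.Quotient.mk_surjective hf hg
    (hspan ⟨p, g, eval x g + w, hg, rfl, hzK, by simpa using neg_mem hw⟩)
  have hqJ : ∀ i, eval x (q i) ∈ J ^ (p - n i) := fun i => Ideal.pow_right_mono hSJ _
    ((Ideal.mem_span_pow_iff_exists_isHomogeneous x _).2 ⟨q i, hq i, rfl⟩)
  refine ⟨fun i => eval x (q i), hqJ, ?_⟩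
  have hsplit : eval x g + w - ∑ i, eval x (q i) * y i = eval x (g - ∑ i, q i * f i) + w
      + ∑ i, eval x (q i) * (eval x (f i) - y i) := by
    simp only [map_sub, map_sum, map_mul, mul_sub, sum_sub_distrib]; ring
  rw [hsplit]
  refine add_mem (add_mem (hgq.eval_mem_pow_succ_of_map_eq_zero hx hgq0) hw)
    (sum_mem fun i _ => Ideal.pow_le_pow_right (show p + 1 ≤ p - n i + (n i + 1) by omega) ?_)
  exact pow_add J _ _ ▸ Ideal.mul_mem_mul (hqJ i) (hy i)

theorem exists_isStandardBasis [Finite σ] [IsNoetherianRing (A ⧸ J)] (hx : ∀ i, x i ∈ J)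
    (hJ : J ≤ Ideal.span (Set.range x) ⊔ J ^ 2) (K : Ideal A) :
    ∃ (T : Finset (MvPolynomial σ (A ⧸ J))) (y : T → A) (n : T → ℕ),
      (∀ i, y i ∈ K) ∧ IsStandardBasis J K y n := by
  obtain ⟨T, hTK, hT⟩ := (Submodule.fg_span_iff_fg_span_finset_subset _).1
    (IsNoetherian.noetherian (Ideal.span (initialForms x J K)))
  choose n f y hf hfT hyK hy using fun F : T => hTK F.2
  refine ⟨T, y, n, hyK, isStandardBasis_of_initialForms_subset_span hx hJ hf hy fun F hF => ?_⟩
  exact Ideal.span_mono (fun G hG => Set.mem_range.2 ⟨⟨G, hG⟩, hfT _⟩)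
    (hT.le (Ideal.subset_span hF))

end InitialForms

theorem statement14_general (A : Type*) [CommRing A] (I : ℕ → Ideal A)
    (hcomplete : ∀ a : ℕ → A, (∀ n m : ℕ, n ≤ m → a m - a n ∈ I n) →
      ∃! x : A, ∀ n : ℕ, x - a n ∈ I n)
    (J : Ideal A) (hnil : ∀ n : ℕ, ∃ m : ℕ, J ^ m ≤ I n)
    (hq : IsNoetherianRing (A ⧸ J))
    (hfg : ∃ s : Finset A, (↑s : Set A) ⊆ J ∧ J = Ideal.span ↑s ⊔ J ^ 2) :
    IsNoetherianRing A := by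
  obtain ⟨s, hsJ, hJ⟩ := hfg
  have hJs : J ≤ Ideal.span (Set.range ((↑) : s → A)) ⊔ J ^ 2 := by
    rw [Subtype.range_coe]
    exact hJ.le
  refine (isNoetherianRing_iff_ideal_fg A).2 fun K => ?_
  obtain ⟨T, y, n, hyK, hy⟩ := exists_isStandardBasis (fun i => hsJ i.2) hJs K
  have hKy : K = Ideal.span (Set.range y) :=
    le_antisymm ((show IsCompleteSeparated I from hcomplete).le_span_of_isStandardBasis hnil hyK hy)
      (Ideal.span_le.2 (Set.range_subset_iff.2 hyK))
  exact hKy ▸ Submodule.fg_span (Set.finite_range y)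

/-- EGA 0.7.2.6: let `A` be a commutative ring, complete and separated
for the linear topology defined by a decreasing sequence of ideals `I n`, and let `J`
be an ideal of definition (`J` is open and `Jᵐ → 0`).  If `A/J` is Noetherian and
`J/J²` is a finitely generated `A/J`-module (i.e. `J = span s ⊔ J²` for a finite set
`s ⊆ J`), then `A` is Noetherian.  (The special case `A/J ≅ k` a field and
`dim_k J/J² < ∞` is an instance of these hypotheses.) -/
theorem statement14 (A : Type*) [CommRing A] (I : ℕ → Ideal A) (hanti : Antitone I)
    (hcomplete : ∀ a : ℕ → A, (∀ n m : ℕ, n ≤ m → a m - a n ∈ I n) →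
      ∃! x : A, ∀ n : ℕ, x - a n ∈ I n)
    (J : Ideal A) (hopen : ∃ n, I n ≤ J) (hnil : ∀ n : ℕ, ∃ m : ℕ, J ^ m ≤ I n)
    (hq : IsNoetherianRing (A ⧸ J))
    (hfg : ∃ s : Finset A, (↑s : Set A) ⊆ J ∧ J = Ideal.span ↑s ⊔ J ^ 2) :
    IsNoetherianRing A :=
  statement14_general A I hcomplete J hnil hq hfg
end
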